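/- arXiv:2305.11590 — 5 statements merged into one kernel-verified Lean document; each statement's English description precedes it below -/
import Mathlib

section
/- For a simple random walk on a finite connected undirected graph G, for any three vertices x, y, z, the hitting times satisfy H(x,y) + H(y,z) + H(z,x) = H(x,z) + H(z,y) + H(y,x). -/
open Finset

/-- State space of the non-atomic walk: original vertices plus directed intermediate states. -/
def NAState (V : Type*) (G : SimpleGraph V) : Type _ :=
  V ⊕ {p : V × V // G.Adj p.1 p.2}

namespace NAState

variable {V : Type*} {G : SimpleGraph V}

/-- Original-vertex state. -/
def orig (v : V) : NAState V G := Sum.inl v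

/-- Intermediate state `s_{ab}`, directed from `a` to `b`. -/
def intm (a b : V) (h : G.Adj a b) : NAState V G := Sum.inr ⟨(a, b), h⟩

/-- Direction reversal: fixes original vertices, reverses intermediate states. -/
def bar : NAState V G → NAState V G
  | Sum.inl v => Sum.inl v
  | Sum.inr ⟨(a, b), h⟩ => Sum.inr ⟨(b, a), h.symm⟩

variable [Fintype V] [DecidableRel G.Adj]

/-- The number `d_s` of adjacent states of a state. -/
def asDeg : NAState V G → ℝ
  | Sum.inl v => (G.degree v : ℝ)
  | Sum.inr _ => 1

/-- Sum of `f` over the adjacent states `N_as(s)` of a state. -/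
def asSum (f : NAState V G → ℝ) : NAState V G → ℝ
  | Sum.inl v => ∑ w ∈ (G.neighborFinset v).attach,
      f (Sum.inr ⟨(v, w.1), (G.mem_neighborFinset _ _).mp w.2⟩)
  | Sum.inr ⟨(_, b), _⟩ => f (Sum.inl b)

end NAState

section Aux

variable {V : Type*} [Fintype V] (G : SimpleGraph V) [DecidableRel G.Adj]

lemma nbr_sum_eq (f : V → ℝ) (u : V) :
    ∑ w ∈ G.neighborFinset u, f w = ∑ w, if G.Adj u w then f w else 0 := by
  rw [SimpleGraph.neighborFinset_eq_filter, Finset.sum_filter]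

lemma swapSum (f g : V → ℝ) :
    ∑ u, f u * ∑ w ∈ G.neighborFinset u, g w
      = ∑ u, g u * ∑ w ∈ G.neighborFinset u, f w := by
  have h : ∀ (f g : V → ℝ), ∑ u, f u * ∑ w ∈ G.neighborFinset u, g w
      = ∑ u, ∑ w, if G.Adj u w then f u * g w else 0 := by
    intro f g
    refine Finset.sum_congr rfl fun u _ => ?_
    rw [nbr_sum_eq, Finset.mul_sum]
    refine Finset.sum_congr rfl fun w _ => ?_
    split <;> ring
  rw [h, h, Finset.sum_comm]
  refine Finset.sum_congr rfl fun u _ => Finset.sum_congr rfl fun w _ => ?_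
  by_cases hadj : G.Adj u w
  · rw [if_pos hadj.symm, if_pos hadj]; ring
  · rw [if_neg (fun h => hadj h.symm), if_neg hadj]

lemma sum_one_nbr (u : V) : ∑ _w ∈ G.neighborFinset u, (1 : ℝ) = (G.degree u : ℝ) := by
  rw [Finset.sum_const, nsmul_eq_mul, mul_one, SimpleGraph.card_neighborFinset_eq_degree]

end Aux

theorem stmt0 {V : Type*} [Fintype V] [DecidableEq V] (G : SimpleGraph V)
    [DecidableRel G.Adj] (hconn : G.Connected)
    (H : V → V → ℝ)
    (hH0 : ∀ v, H v v = 0)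
    (hHstep : ∀ u v : V, u ≠ v →
      H u v = 1 + (1 / (G.degree u : ℝ)) * ∑ w ∈ G.neighborFinset u, H w v)
    (x y z : V) :
    H x y + H y z + H z x = H x z + H z y + H y x := by
  rcases subsingleton_or_nontrivial V with hsub | hnt
  · have hxy : x = y := Subsingleton.elim x y
    have hyz : y = z := Subsingleton.elim y z
    subst hxy; subst hyz
    ring
  -- degree positivity
  have hdeg : ∀ u : V, (0 : ℝ) < (G.degree u : ℝ) := by
    intro u
    obtain ⟨w, hw⟩ := exists_ne u
    obtain ⟨p⟩ := hconn.preconnected u w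
    have : ∃ t, G.Adj u t := by
      cases p with
      | nil => exact absurd rfl hw.symm
      | cons h _ => exact ⟨_, h⟩
    exact_mod_cast (G.degree_pos_iff_exists_adj u).mpr this
  set d : V → ℝ := fun u => (G.degree u : ℝ) with hd
  set m2 : ℝ := ∑ u, d u with hm2
  -- multiplied-out step equation
  have hstep : ∀ u v : V, u ≠ v →
      d u * H u v = d u + ∑ w ∈ G.neighborFinset u, H w v := by
    intro u v huv
    have hne : d u ≠ 0 := ne_of_gt (hdeg u)
    rw [hHstep u v huv, mul_add, mul_one, ← mul_assoc, mul_one_div, div_self hne, one_mul]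
  -- swap corollary
  have hswap1 : ∀ f : V → ℝ,
      ∑ u, ∑ w ∈ G.neighborFinset u, f w = ∑ u, d u * f u := by
    intro f
    have h := swapSum G (fun _ => (1:ℝ)) f
    simp only [one_mul, sum_one_nbr] at h
    rw [h]
    exact Finset.sum_congr rfl fun u _ => by rw [mul_comm]
  -- return identity
  have hret : ∀ v : V, ∑ u ∈ G.neighborFinset v, H u v = m2 - d v := by
    intro v
    have hsum : ∑ w, (d w * H w v - (d w + ∑ u ∈ G.neighborFinset w, H u v))
        = -(d v + ∑ u ∈ G.neighborFinset v, H u v) := by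
      rw [Finset.sum_eq_single v]
      · rw [hH0, mul_zero, zero_sub]
      · intro w _ hwv
        rw [hstep w v hwv]; ring
      · intro h; exact absurd (Finset.mem_univ v) h
    rw [Finset.sum_sub_distrib, Finset.sum_add_distrib, hswap1 (fun u => H u v)] at hsum
    simp only [← hm2] at hsum
    linarith [hsum]
  -- Laplacian identity
  have hlap : ∀ a b u : V,
      d u * (H u a - H u b) - ∑ w ∈ G.neighborFinset u, (H w a - H w b)
        = m2 * ((if u = b then 1 else 0) - (if u = a then 1 else 0)) := by
    intro a b u
    rcases eq_or_ne a b with rfl | hab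
    · simp
    rw [Finset.sum_sub_distrib]
    rcases eq_or_ne u a with rfl | hua
    · have hub : u ≠ b := hab
      have h1 := hstep u b hub
      have h2 := hret u
      rw [hH0, if_pos rfl, if_neg hub]
      linarith
    rcases eq_or_ne u b with rfl | hub
    · have h1 := hstep u a hua
      have h2 := hret u
      rw [hH0, if_pos rfl, if_neg hua]
      linarith
    · have h1 := hstep u a hua
      have h2 := hstep u b hub
      rw [if_neg hub, if_neg hua]
      linarith
  -- bilinear form symmetry
  set f : V → ℝ := fun u => H u x - H u y with hf
  set g : V → ℝ := fun u => H u y - H u z with hg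
  have key : ∑ u, f u * (d u * g u - ∑ w ∈ G.neighborFinset u, g w)
      = ∑ u, g u * (d u * f u - ∑ w ∈ G.neighborFinset u, f w) := by
    simp only [mul_sub]
    rw [Finset.sum_sub_distrib, Finset.sum_sub_distrib, swapSum G f g]
    congr 1
    exact Finset.sum_congr rfl fun u _ => by ring
  have e1 : ∑ u, f u * (d u * g u - ∑ w ∈ G.neighborFinset u, g w)
      = ∑ u, f u * (m2 * ((if u = z then 1 else 0) - (if u = y then 1 else 0))) :=
    Finset.sum_congr rfl fun u _ => by simp only [hg]; rw [hlap y z u]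
  have e2 : ∑ u, g u * (d u * f u - ∑ w ∈ G.neighborFinset u, f w)
      = ∑ u, g u * (m2 * ((if u = y then 1 else 0) - (if u = x then 1 else 0))) :=
    Finset.sum_congr rfl fun u _ => by simp only [hf]; rw [hlap x y u]
  -- evaluate the delta sums
  have hsum2 : ∀ (c : V → ℝ) (a b : V),
      ∑ u, c u * (m2 * ((if u = b then 1 else 0) - (if u = a then 1 else 0)))
        = m2 * (c b - c a) := by
    intro c a b
    have h : ∀ u, c u * (m2 * ((if u = b then 1 else 0) - (if u = a then 1 else 0)))
        = (if u = b then m2 * c u else 0) - (if u = a then m2 * c u else 0) := by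
      intro u; split <;> split <;> ring
    simp only [h]
    rw [Finset.sum_sub_distrib, Finset.sum_ite_eq' univ b (fun u => m2 * c u),
      Finset.sum_ite_eq' univ a (fun u => m2 * c u)]
    simp only [Finset.mem_univ, if_pos]
    ring
  rw [e1, e2, hsum2, hsum2] at key
  have hm2pos : 0 < m2 := Finset.sum_pos (fun u _ => hdeg u) Finset.univ_nonempty
  have hfg : f z - f y = g y - g x := mul_left_cancel₀ (ne_of_gt hm2pos) key
  simp only [hf, hg, hH0] at hfg
  linarith
end

section
/- For a simple random walk on a finite connected undirected graph, the relation defined by u ≤ v iff H(u,v) ≤ H(v,u) is transitive. -/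
open Finset

set_option linter.unusedSectionVars false

section AuxHT

variable {V : Type*} [Fintype V] [DecidableEq V] (G : SimpleGraph V) [DecidableRel G.Adj]

private lemma ht_swapSum (F : V → V → ℝ) :
    ∑ u, ∑ w ∈ G.neighborFinset u, F u w = ∑ u, ∑ w ∈ G.neighborFinset u, F w u := by
  have l1 : ∀ u : V, ∑ w ∈ G.neighborFinset u, F u w
      = ∑ w, if G.Adj u w then F u w else 0 := fun u => by
    rw [SimpleGraph.neighborFinset_eq_filter, Finset.sum_filter]
  have l2 : ∀ u : V, ∑ w ∈ G.neighborFinset u, F w u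
      = ∑ w, if G.Adj u w then F w u else 0 := fun u => by
    rw [SimpleGraph.neighborFinset_eq_filter, Finset.sum_filter]
  calc ∑ u, ∑ w ∈ G.neighborFinset u, F u w
      = ∑ u, ∑ w, if G.Adj u w then F u w else 0 :=
        Finset.sum_congr rfl fun u _ => l1 u
    _ = ∑ w, ∑ u, if G.Adj u w then F u w else 0 := Finset.sum_comm
    _ = ∑ w, ∑ u, if G.Adj w u then F u w else 0 := by
        refine Finset.sum_congr rfl fun a _ => Finset.sum_congr rfl fun b _ => ?_
        by_cases hab : G.Adj b a
        · simp [hab, hab.symm]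
        · have hba : ¬ G.Adj a b := fun h' => hab h'.symm
          simp [hab, hba]
    _ = ∑ u, ∑ w ∈ G.neighborFinset u, F w u :=
        (Finset.sum_congr rfl fun u _ => (l2 u).symm)

variable (H : V → V → ℝ)

private lemma ht_cleared
    (hHstep : ∀ u v : V, u ≠ v →
      H u v = 1 + (1 / (G.degree u : ℝ)) * ∑ w ∈ G.neighborFinset u, H w v)
    {u v : V} (huv : u ≠ v) :
    (G.degree u : ℝ) * H u v = (G.degree u : ℝ) + ∑ w ∈ G.neighborFinset u, H w v := by
  by_cases hd : G.degree u = 0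
  · have hempty : G.neighborFinset u = ∅ := by
      rwa [← Finset.card_eq_zero, SimpleGraph.card_neighborFinset_eq_degree]
    simp [hd, hempty]
  · have hd' : (G.degree u : ℝ) ≠ 0 := Nat.cast_ne_zero.mpr hd
    rw [hHstep u v huv]
    field_simp

/-- `∑_{w ~ v} H w v = 2m - deg v`. -/
private lemma ht_cv
    (hH0 : ∀ v, H v v = 0)
    (hHstep : ∀ u v : V, u ≠ v →
      H u v = 1 + (1 / (G.degree u : ℝ)) * ∑ w ∈ G.neighborFinset u, H w v)
    (v : V) :
    ∑ w ∈ G.neighborFinset v, H w v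
      = (∑ u, (G.degree u : ℝ)) - (G.degree v : ℝ) := by
  have h1 : ∑ u ∈ univ.erase v, ((G.degree u : ℝ) * H u v)
      = ∑ u ∈ univ.erase v, ((G.degree u : ℝ) + ∑ w ∈ G.neighborFinset u, H w v) :=
    Finset.sum_congr rfl fun u hu => ht_cleared G H hHstep (Finset.ne_of_mem_erase hu)
  have h2 : ∑ u ∈ univ.erase v, ((G.degree u : ℝ) * H u v)
      = ∑ u, (G.degree u : ℝ) * H u v := by
    rw [Finset.sum_erase_eq_sub (Finset.mem_univ v), hH0 v, mul_zero, sub_zero]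
  have h3 : ∑ u ∈ univ.erase v, (G.degree u : ℝ)
      = (∑ u, (G.degree u : ℝ)) - (G.degree v : ℝ) := by
    rw [Finset.sum_erase_eq_sub (Finset.mem_univ v)]
  have h4 : ∑ u ∈ univ.erase v, ∑ w ∈ G.neighborFinset u, H w v
      = (∑ u, ∑ w ∈ G.neighborFinset u, H w v) - ∑ w ∈ G.neighborFinset v, H w v := by
    rw [Finset.sum_erase_eq_sub (Finset.mem_univ v)]
  have h5 : ∑ u, ∑ w ∈ G.neighborFinset u, H w v = ∑ u, (G.degree u : ℝ) * H u v := by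
    rw [ht_swapSum G (fun a b => H b v)]
    refine Finset.sum_congr rfl fun u _ => ?_
    rw [Finset.sum_const, SimpleGraph.card_neighborFinset_eq_degree, nsmul_eq_mul]
  rw [Finset.sum_add_distrib, h2, h3, h4, h5] at h1
  linarith

/-- Main identity: `α u - 2m · H v u = α v - 2m · H u v` where `α v = ∑_w d w · H w v`. -/
private lemma ht_main
    (hH0 : ∀ v, H v v = 0)
    (hHstep : ∀ u v : V, u ≠ v →
      H u v = 1 + (1 / (G.degree u : ℝ)) * ∑ w ∈ G.neighborFinset u, H w v)
    (u v : V) :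
    (∑ w, (G.degree w : ℝ) * H w u) - (∑ w, (G.degree w : ℝ)) * H v u
      = (∑ w, (G.degree w : ℝ) * H w v) - (∑ w, (G.degree w : ℝ)) * H u v := by
  set d : V → ℝ := fun w => (G.degree w : ℝ) with hd
  set m2 : ℝ := ∑ w, d w with hm2
  set f : V → ℝ := fun w => H w v with hf
  set g : V → ℝ := fun w => H w u with hg
  -- Green's identity
  have hswap : ∑ w, ∑ x ∈ G.neighborFinset w, f x * g w
      = ∑ w, ∑ x ∈ G.neighborFinset w, f w * g x := ht_swapSum G (fun a b => f b * g a)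
  have green : ∑ w, (d w * f w - ∑ x ∈ G.neighborFinset w, f x) * g w
      = ∑ w, f w * (d w * g w - ∑ x ∈ G.neighborFinset w, g x) := by
    have e1 : ∀ w : V, (d w * f w - ∑ x ∈ G.neighborFinset w, f x) * g w
        = d w * f w * g w - ∑ x ∈ G.neighborFinset w, f x * g w := by
      intro w; rw [sub_mul, Finset.sum_mul]
    have e2 : ∀ w : V, f w * (d w * g w - ∑ x ∈ G.neighborFinset w, g x)
        = d w * f w * g w - ∑ x ∈ G.neighborFinset w, f w * g x := by
      intro w; rw [mul_sub, Finset.mul_sum]; ring_nf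
    simp only [e1, e2, Finset.sum_sub_distrib]
    rw [hswap]
  -- evaluate the left side of Green
  have hLfv : d v * f v - ∑ x ∈ G.neighborFinset v, f x = d v - m2 := by
    show d v * H v v - ∑ x ∈ G.neighborFinset v, H x v = d v - m2
    rw [hH0, mul_zero, ht_cv G H hH0 hHstep v, hm2]
    ring
  have hLf : ∀ w : V, w ≠ v → d w * f w - ∑ x ∈ G.neighborFinset w, f x = d w := by
    intro w hw
    have := ht_cleared G H hHstep hw
    show d w * H w v - ∑ x ∈ G.neighborFinset w, H x v = d w
    rw [this]; ring
  have stepL : ∑ w, ((d w * f w - ∑ x ∈ G.neighborFinset w, f x) - d w) * g w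
      = -m2 * g v := by
    rw [Finset.sum_eq_single v]
    · rw [hLfv]; ring
    · intro b _ hb; rw [hLf b hb, sub_self, zero_mul]
    · intro h; exact absurd (Finset.mem_univ v) h
  have expandL : ∑ w, ((d w * f w - ∑ x ∈ G.neighborFinset w, f x) - d w) * g w
      = (∑ w, (d w * f w - ∑ x ∈ G.neighborFinset w, f x) * g w) - ∑ w, d w * g w := by
    simp only [sub_mul, Finset.sum_sub_distrib]
  -- evaluate the right side of Green
  have hLgu : d u * g u - ∑ x ∈ G.neighborFinset u, g x = d u - m2 := by
    show d u * H u u - ∑ x ∈ G.neighborFinset u, H x u = d u - m2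
    rw [hH0, mul_zero, ht_cv G H hH0 hHstep u, hm2]
    ring
  have hLg : ∀ w : V, w ≠ u → d w * g w - ∑ x ∈ G.neighborFinset w, g x = d w := by
    intro w hw
    have := ht_cleared G H hHstep hw
    show d w * H w u - ∑ x ∈ G.neighborFinset w, H x u = d w
    rw [this]; ring
  have stepR : ∑ w, f w * ((d w * g w - ∑ x ∈ G.neighborFinset w, g x) - d w)
      = f u * (-m2) := by
    rw [Finset.sum_eq_single u]
    · rw [hLgu]; ring
    · intro b _ hb; rw [hLg b hb, sub_self, mul_zero]
    · intro h; exact absurd (Finset.mem_univ u) h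
  have expandR : ∑ w, f w * ((d w * g w - ∑ x ∈ G.neighborFinset w, g x) - d w)
      = (∑ w, f w * (d w * g w - ∑ x ∈ G.neighborFinset w, g x)) - ∑ w, f w * d w := by
    simp only [mul_sub, Finset.sum_sub_distrib]
  have hgdg : ∑ w, d w * g w = ∑ w, d w * H w u := rfl
  have hfdf : ∑ w, f w * d w = ∑ w, d w * H w v := by
    refine Finset.sum_congr rfl fun w _ => ?_; ring
  have hgv : g v = H v u := rfl
  have hfu : f u = H u v := rfl
  rw [expandL] at stepL
  rw [expandR] at stepR
  rw [hgdg] at stepL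
  rw [hfdf] at stepR
  rw [hgv] at stepL
  rw [hfu] at stepR
  -- combine
  have := green
  nlinarith [stepL, stepR, this]

end AuxHT

theorem stmt1 {V : Type*} [Fintype V] [DecidableEq V] (G : SimpleGraph V)
    [DecidableRel G.Adj] (hconn : G.Connected)
    (H : V → V → ℝ)
    (hH0 : ∀ v, H v v = 0)
    (hHstep : ∀ u v : V, u ≠ v →
      H u v = 1 + (1 / (G.degree u : ℝ)) * ∑ w ∈ G.neighborFinset u, H w v)
    (x y z : V) (hxy : H x y ≤ H y x) (hyz : H y z ≤ H z y) :
    H x z ≤ H z x := by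
  by_cases hxz : x = z
  · subst hxz; exact le_refl _
  · set m2 : ℝ := ∑ w, (G.degree w : ℝ) with hm2
    have hm2pos : 0 < m2 := by
      obtain ⟨p⟩ := hconn.preconnected x z
      obtain ⟨w, hadj⟩ : ∃ w, G.Adj x w := by
        cases p with
        | nil => exact absurd rfl hxz
        | cons h _ => exact ⟨_, h⟩
      have hdx : 0 < G.degree x := (G.degree_pos_iff_exists_adj x).mpr ⟨w, hadj⟩
      have hdx' : (0 : ℝ) < (G.degree x : ℝ) := by exact_mod_cast hdx
      have hle : (G.degree x : ℝ) ≤ m2 := by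
        rw [hm2]
        exact Finset.single_le_sum (f := fun w : V => (G.degree w : ℝ))
          (fun i _ => by positivity) (Finset.mem_univ x)
      linarith
    have h1 := ht_main G H hH0 hHstep x y
    have h2 := ht_main G H hH0 hHstep y z
    have h3 := ht_main G H hH0 hHstep x z
    rw [← hm2] at h1 h2 h3
    nlinarith [h1, h2, h3, hm2pos]
end

section
/- Every finite connected undirected graph has a 'hidden' vertex: a vertex z such that H(z,v) ≤ H(v,z) for all vertices v. -/
open Finset

theorem stmt2 {V : Type*} [Fintype V] [DecidableEq V] (G : SimpleGraph V)
    [DecidableRel G.Adj] (hconn : G.Connected)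
    (H : V → V → ℝ)
    (hH0 : ∀ v, H v v = 0)
    (hHstep : ∀ u v : V, u ≠ v →
      H u v = 1 + (1 / (G.degree u : ℝ)) * ∑ w ∈ G.neighborFinset u, H w v) :
    ∃ z : V, ∀ v : V, H z v ≤ H v z := by
  obtain ⟨x0⟩ := hconn.nonempty
  by_cases hcard : Fintype.card V ≤ 1
  · refine ⟨x0, fun v => ?_⟩
    have hv : v = x0 := Fintype.card_le_one_iff.mp hcard v x0
    subst hv; exact le_refl _
  push_neg at hcard
  set d : V → ℝ := fun x => (G.degree x : ℝ) with hd
  have hdeg : ∀ x : V, 0 < d x := by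
    intro x
    have : 0 < G.degree x := by
      rw [SimpleGraph.degree_pos_iff_exists_adj]
      obtain ⟨y, hy⟩ := Fintype.exists_ne_of_one_lt_card hcard x
      obtain ⟨p⟩ := hconn x y
      cases p with
      | nil => exact absurd rfl hy.symm
      | cons h _ => exact ⟨_, h⟩
    simpa [hd] using this
  set E : ℝ := ∑ x, d x with hE
  set φ : V → ℝ := fun v => ∑ x, H x v * d x with hφ
  have exch : ∀ f : V → ℝ, ∑ x, ∑ w ∈ G.neighborFinset x, f w = ∑ w, d w * f w := by
    intro f
    simp only [SimpleGraph.neighborFinset_eq_filter, sum_filter]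
    rw [Finset.sum_comm]
    refine Finset.sum_congr rfl fun w _ => ?_
    have hc : ∀ x : V, G.Adj x w ↔ G.Adj w x := fun x => G.adj_comm x w
    simp only [hc]
    rw [← sum_filter, ← SimpleGraph.neighborFinset_eq_filter, Finset.sum_const,
      nsmul_eq_mul]
    rfl
  have stepB : ∀ x v : V, x ≠ v →
      d x * H x v = d x + ∑ w ∈ G.neighborFinset x, H w v := by
    intro x v h
    rw [hHstep x v h, mul_add, mul_one, ← mul_assoc, mul_one_div_cancel (hdeg x).ne',
      one_mul]
  have sumC : ∀ v : V, ∑ w ∈ G.neighborFinset v, H w v = E - d v := by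
    intro v
    have h1 : ∑ x ∈ univ.erase v, (d x * H x v)
        = ∑ x ∈ univ.erase v, (d x + ∑ w ∈ G.neighborFinset x, H w v) :=
      Finset.sum_congr rfl fun x hx => stepB x v (Finset.ne_of_mem_erase hx)
    have e1 : ∑ x ∈ univ.erase v, (d x * H x v) = ∑ x, d x * H x v := by
      rw [Finset.sum_erase_eq_sub (mem_univ v), hH0, mul_zero, sub_zero]
    have e2 : ∑ x ∈ univ.erase v, d x = E - d v := by
      rw [Finset.sum_erase_eq_sub (mem_univ v)]
    have e3 : ∑ x ∈ univ.erase v, ∑ w ∈ G.neighborFinset x, H w v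
        = (∑ x, d x * H x v) - ∑ w ∈ G.neighborFinset v, H w v := by
      rw [Finset.sum_erase_eq_sub (mem_univ v), exch (fun w => H w v)]
    rw [Finset.sum_add_distrib, e1, e2, e3] at h1
    linarith
  have delta : ∀ v x : V,
      d x * H x v - ∑ w ∈ G.neighborFinset x, H w v
        = d x - (if x = v then E else 0) := by
    intro v x
    by_cases hxv : x = v
    · subst hxv
      rw [sumC x, hH0, mul_zero, if_pos rfl]; ring
    · rw [stepB x v hxv, if_neg hxv]; ring
  -- Green / symmetry identity
  have dbl : ∀ u v : V, ∑ x, ∑ w ∈ G.neighborFinset x, H x u * H w v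
      = ∑ x, ∑ w ∈ G.neighborFinset x, H x v * H w u := by
    intro u v
    simp only [SimpleGraph.neighborFinset_eq_filter, sum_filter]
    rw [Finset.sum_comm]
    refine Finset.sum_congr rfl fun x _ => Finset.sum_congr rfl fun w _ => ?_
    simp only [G.adj_comm w x]
    by_cases h : G.Adj x w
    · simp only [if_pos h]; ring
    · simp only [if_neg h]
  have main : ∀ u v : V, φ u - E * H v u = φ v - E * H u v := by
    intro u v
    have eval : ∀ a b : V,
        ∑ x, H x a * (d x * H x b - ∑ w ∈ G.neighborFinset x, H w b)
          = φ a - E * H b a := by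
      intro a b
      have : ∀ x, H x a * (d x * H x b - ∑ w ∈ G.neighborFinset x, H w b)
          = H x a * d x - H x a * (if x = b then E else 0) := by
        intro x; rw [delta b x]; ring
      simp only [this]
      rw [Finset.sum_sub_distrib]
      congr 1
      simp only [mul_ite, mul_zero]
      rw [Finset.sum_ite_eq' univ b (fun x => H x a * E)]
      simp [mul_comm]
    have expand : ∀ a b : V,
        ∑ x, H x a * (d x * H x b - ∑ w ∈ G.neighborFinset x, H w b)
          = (∑ x, H x a * (d x * H x b))
            - ∑ x, ∑ w ∈ G.neighborFinset x, H x a * H w b := by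
      intro a b
      rw [← Finset.sum_sub_distrib]
      exact Finset.sum_congr rfl fun x _ => by rw [mul_sub, Finset.mul_sum]
    have sym : ∑ x, H x u * (d x * H x v - ∑ w ∈ G.neighborFinset x, H w v)
        = ∑ x, H x v * (d x * H x u - ∑ w ∈ G.neighborFinset x, H w u) := by
      rw [expand u v, expand v u, dbl u v]
      congr 1
      exact Finset.sum_congr rfl fun x _ => by ring
    rw [eval u v, eval v u] at sym
    exact sym
  obtain ⟨z, -, hz⟩ := Finset.exists_max_image univ φ ⟨x0, mem_univ x0⟩
  refine ⟨z, fun v => ?_⟩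
  have hEpos : 0 < E := Finset.sum_pos (fun x _ => hdeg x) ⟨x0, mem_univ x0⟩
  have h1 := main z v
  have h2 := hz v (mem_univ v)
  nlinarith [h1, h2, hEpos]
end

section
/- For the extended hitting time of the non-atomic walk and any states x, y, z (original or intermediate), H̃(x, ȳ) + H̃(y, z̄) + H̃(z, x̄) = H̃(x, z̄) + H̃(z, ȳ) + H̃(y, x̄), where s̄ denotes the direction-reversed state (s̄ = s for original vertices and s̄_{ab} = s_{ba} for intermediate states). -/
open Finset

/-!
The chain on states that moves from `v` to a uniformly chosen `s_{vw}` and from `s_{ab}` to `b`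
has stationary weights `d_s` and is reversible up to the direction reversal:
`d_s P(s̄, t̄) = d_t P(t, s)`. With the fundamental matrix `Z = (1 - P + 𝟙πᵀ)⁻¹`, every solution of
the hitting-time equations is `H(x, y) = (Z(y, y) - Z(x, y)) / π(y)`, and the twisted
reversibility passes to `Z` as `π(x) Z(x̄, ȳ) = π(y) Z(y, x)`. Hence
`H(x, ȳ) - H(y, x̄) = φ(y) - φ(x)` with `φ(u) = Z(u, u) / π(u)`, and the alternating sum around
the triangle `x, y, z` telescopes.
-/

open Matrix

section HittingTimes

variable {S : Type*} [Fintype S]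

lemma vecMul_replicateRow_self {π : S → ℝ} (hπ1 : ∑ s, π s = 1) :
    π ᵥ* replicateRow S π = π := by
  ext t
  simp [vecMul, dotProduct, ← Finset.sum_mul, hπ1]

lemma vecMul_eq_self_of_twisted {P : Matrix S S ℝ} {μ : S → ℝ} {σ : S → S}
    (hσ : Function.Involutive σ) (hP1 : ∀ s, ∑ t, P s t = 1)
    (hrev : ∀ s t, μ s * P (σ s) (σ t) = μ t * P t s) : μ ᵥ* P = μ := by
  ext t
  calc (μ ᵥ* P) t = ∑ s, μ t * P (σ t) (σ s) := by simp only [vecMul, dotProduct, hrev]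
    _ = μ t * ∑ s, P (σ t) s := by
      rw [← Finset.mul_sum]
      exact congrArg (μ t * ·) (Equiv.sum_comp (hσ.toPerm σ) (P (σ t)))
    _ = μ t := by rw [hP1, mul_one]

lemma eq_of_mulVec_eq_self {P : Matrix S S ℝ} (hP0 : ∀ s t, 0 ≤ P s t)
    (hP1 : ∀ s, ∑ t, P s t = 1)
    (hreach : ∀ s t, Relation.ReflTransGen (fun a b => P a b ≠ 0) s t)
    {f : S → ℝ} (hf : P *ᵥ f = f) (s t : S) : f s = f t := by
  obtain ⟨m, -, hm⟩ := Finset.exists_max_image Finset.univ f ⟨s, Finset.mem_univ s⟩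
  -- Maximum principle: `f a` is a `P`-average, so a maximum propagates along positive transitions.
  have hclosed : ∀ a b, f a = f m → P a b ≠ 0 → f b = f m := by
    intro a b ha hab
    have hsum : ∑ c, P a c * (f m - f c) = 0 := by
      have hfa : ∑ c, P a c * f c = f a := congrFun hf a
      simp only [mul_sub, Finset.sum_sub_distrib, ← Finset.sum_mul, hP1, one_mul, hfa, ha,
        sub_self]
    have hterm := (Finset.sum_eq_zero_iff_of_nonneg fun c _ =>
      mul_nonneg (hP0 a c) (sub_nonneg.mpr (hm c (Finset.mem_univ c)))).mp hsum b
      (Finset.mem_univ b)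
    rcases mul_eq_zero.mp hterm with h | h
    · exact absurd h hab
    · linarith
  have hmax : ∀ u, f u = f m := fun u => by
    induction hreach m u with
    | refl => rfl
    | tail _ hab ih => exact hclosed _ _ ih hab
  rw [hmax s, hmax t]

structure IsHittingTime (P : Matrix S S ℝ) (H : S → S → ℝ) : Prop where
  self : ∀ s, H s s = 0
  step : ∀ s t, s ≠ t → H s t = 1 + (P *ᵥ fun u => H u t) s

variable [DecidableEq S]

noncomputable def fundamentalMatrix (P : Matrix S S ℝ) (π : S → ℝ) : Matrix S S ℝ :=
  (1 - P + replicateRow S π)⁻¹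

variable {P : Matrix S S ℝ} {π : S → ℝ}

lemma vecMul_one_sub_add_replicateRow (hπP : π ᵥ* P = π) (hπ1 : ∑ s, π s = 1) :
    π ᵥ* (1 - P + replicateRow S π) = π := by
  rw [vecMul_add, vecMul_sub, vecMul_one, hπP, vecMul_replicateRow_self hπ1, sub_self,
    zero_add]

lemma isUnit_det_one_sub_add_replicateRow (hπP : π ᵥ* P = π) (hπ1 : ∑ s, π s = 1)
    (hharm : ∀ f : S → ℝ, P *ᵥ f = f → ∀ s t, f s = f t) :
    IsUnit (1 - P + replicateRow S π).det := by
  rw [isUnit_iff_ne_zero, Ne, ← exists_mulVec_eq_zero_iff]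
  rintro ⟨g, hg0, hg⟩
  have hmean : π ⬝ᵥ g = 0 := by
    have := congrArg (π ⬝ᵥ ·) hg
    simpa only [dotProduct_mulVec, vecMul_one_sub_add_replicateRow hπP hπ1,
      dotProduct_zero] using this
  have hfix : P *ᵥ g = g := by
    rw [add_mulVec, sub_mulVec, one_mulVec, replicateRow_mulVec_eq_const, hmean] at hg
    exact (sub_eq_zero.mp (by simpa using hg)).symm
  refine hg0 (funext fun s => ?_)
  have hconst : g = fun _ => g s := funext fun t => hharm g hfix t s
  rw [hconst] at hmean
  simpa [dotProduct, ← Finset.sum_mul, hπ1] using hmean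

lemma vecMul_fundamentalMatrix (hπP : π ᵥ* P = π) (hπ1 : ∑ s, π s = 1)
    (hharm : ∀ f : S → ℝ, P *ᵥ f = f → ∀ s t, f s = f t) :
    π ᵥ* fundamentalMatrix P π = π := by
  calc π ᵥ* fundamentalMatrix P π
      = (π ᵥ* (1 - P + replicateRow S π)) ᵥ* fundamentalMatrix P π := by
        rw [vecMul_one_sub_add_replicateRow hπP hπ1]
    _ = π := by
        rw [vecMul_vecMul, fundamentalMatrix,
          mul_nonsing_inv _ (isUnit_det_one_sub_add_replicateRow hπP hπ1 hharm), vecMul_one]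

lemma mul_fundamentalMatrix (hπP : π ᵥ* P = π) (hπ1 : ∑ s, π s = 1)
    (hharm : ∀ f : S → ℝ, P *ᵥ f = f → ∀ s t, f s = f t) :
    P * fundamentalMatrix P π = fundamentalMatrix P π - 1 + replicateRow S π := by
  have h := mul_nonsing_inv _ (isUnit_det_one_sub_add_replicateRow hπP hπ1 hharm)
  rw [add_mul, sub_mul, one_mul, ← replicateRow_vecMul, ← fundamentalMatrix,
    vecMul_fundamentalMatrix hπP hπ1 hharm] at h
  rw [← h]
  abel

variable {σ : S → S}

/-- `hrev` says that the time reversal of the chain is its conjugate by `σ`: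
`diagonal π * P.submatrix σ σ = Pᵀ * diagonal π`. -/
lemma fundamentalMatrix_apply_twisted (hσ : Function.Involutive σ) (hπ : ∀ s, π s ≠ 0)
    (hπσ : ∀ s, π (σ s) = π s) (hrev : ∀ s t, π s * P (σ s) (σ t) = π t * P t s) (x y : S) :
    fundamentalMatrix P π (σ x) (σ y) = π y / π x * fundamentalMatrix P π y x := by
  set A := 1 - P + replicateRow S π
  have hA : A.submatrix σ σ = diagonal π⁻¹ * Aᵀ * diagonal π := by
    ext s t
    have hP : P (σ s) (σ t) = π t * P t s / π s := by
      rw [eq_div_iff (hπ s), mul_comm, hrev]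
    have := hπ s
    simp only [A, submatrix_apply, Matrix.add_apply, Matrix.sub_apply, one_apply,
      hσ.injective.eq_iff, replicateRow_apply, hP, hπσ, diagonal_mul, mul_diagonal,
      transpose_apply, Pi.inv_apply, eq_comm (a := t)]
    split_ifs with hst
    · subst hst
      field_simp
    · field_simp
      ring
  have hD : diagonal π * diagonal π⁻¹ = 1 := by
    rw [diagonal_mul_diagonal, ← diagonal_one]
    exact congrArg diagonal (funext fun s => mul_inv_cancel₀ (hπ s))
  have hinv := inv_submatrix_equiv A (hσ.toPerm σ) (hσ.toPerm σ)
  rw [Function.Involutive.coe_toPerm, hA, Matrix.mul_inv_rev, Matrix.mul_inv_rev,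
    inv_eq_right_inv hD, inv_eq_left_inv hD, ← transpose_nonsing_inv] at hinv
  have := congrFun (congrFun hinv x) y
  simp only [diagonal_mul, mul_diagonal, transpose_apply, Pi.inv_apply, submatrix_apply] at this
  rw [fundamentalMatrix, ← this, div_eq_inv_mul]
  ring

namespace IsHittingTime

variable {H : S → S → ℝ}

lemma mulVec_add_one (hH : IsHittingTime P H) (hπP : π ᵥ* P = π) (hπ1 : ∑ s, π s = 1)
    {y : S} (hπy : π y ≠ 0) (s : S) :
    (P *ᵥ fun u => H u y) s + 1 = H s y + if s = y then (π y)⁻¹ else 0 := by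
  set h : S → ℝ := fun u => H u y
  set r := (P *ᵥ h) y + 1
  have hstep : ∀ s, (P *ᵥ h) s + 1 = h s + if s = y then r else 0 := by
    intro s
    by_cases hs : s = y
    · subst hs
      simp [h, r, hH.self]
    · simp [h, hs, hH.step s y hs, add_comm]
  -- Kac's formula: averaging `hstep` against the stationary `π` gives `π y * r = 1`.
  have hkac : π y * r = 1 := by
    have hmean : π ⬝ᵥ (P *ᵥ h) = π ⬝ᵥ h := by rw [dotProduct_mulVec, hπP]
    have := Finset.sum_congr rfl fun s (_ : s ∈ Finset.univ) => congrArg (π s * ·) (hstep s)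
    simp only [mul_add, Finset.sum_add_distrib, mul_one, hπ1, mul_ite, mul_zero,
      Finset.sum_ite_eq', Finset.mem_univ, if_true] at this
    simp only [dotProduct] at hmean
    linarith
  rw [hstep, eq_inv_of_mul_eq_one_right hkac]

lemma eq_fundamentalMatrix (hH : IsHittingTime P H) (hπP : π ᵥ* P = π)
    (hπ1 : ∑ s, π s = 1) (hharm : ∀ f : S → ℝ, P *ᵥ f = f → ∀ s t, f s = f t)
    {y : S} (hπy : π y ≠ 0) (x : S) :
    H x y = (fundamentalMatrix P π y y - fundamentalMatrix P π x y) / π y := by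
  set Z := fundamentalMatrix P π
  set d : S → ℝ := fun s => H s y + Z s y / π y
  have hPZ : ∀ s, ∑ u, P s u * Z u y = Z s y - (if s = y then 1 else 0) + π y := by
    intro s
    have := congrFun (congrFun (mul_fundamentalMatrix hπP hπ1 hharm) s) y
    simpa [mul_apply, one_apply] using this
  have hd : P *ᵥ d = d := by
    funext s
    have h1 := mulVec_add_one hH hπP hπ1 hπy s
    simp only [mulVec, dotProduct, d, mul_add, Finset.sum_add_distrib, ← mul_div_assoc,
      ← Finset.sum_div, hPZ] at h1 ⊢
    rw [add_div, sub_div, div_self hπy]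
    split_ifs at h1 ⊢ <;> simp only [one_div, zero_div] <;> linarith
  have := hharm d hd x y
  simp only [d, hH.self, zero_add] at this
  rw [sub_div]
  linarith

lemma sub_twisted_eq (hH : IsHittingTime P H) (hπP : π ᵥ* P = π) (hπ1 : ∑ s, π s = 1)
    (hharm : ∀ f : S → ℝ, P *ᵥ f = f → ∀ s t, f s = f t) (hπ : ∀ s, π s ≠ 0)
    (hσ : Function.Involutive σ) (hπσ : ∀ s, π (σ s) = π s)
    (hrev : ∀ s t, π s * P (σ s) (σ t) = π t * P t s) (x y : S) :
    H x (σ y) - H y (σ x) =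
      fundamentalMatrix P π y y / π y - fundamentalMatrix P π x x / π x := by
  have hZ := fundamentalMatrix_apply_twisted hσ hπ hπσ hrev
  have hdiag : ∀ u, fundamentalMatrix P π (σ u) (σ u) = fundamentalMatrix P π u u := fun u => by
    rw [hZ, div_self (hπ u), one_mul]
  have hoff : fundamentalMatrix P π x (σ y) = π y / π x * fundamentalMatrix P π y (σ x) := by
    simpa only [hσ x, hπσ] using hZ (σ x) y
  rw [hH.eq_fundamentalMatrix hπP hπ1 hharm (hπ _), hH.eq_fundamentalMatrix hπP hπ1 hharm (hπ _),
    hdiag, hdiag, hoff, hπσ, hπσ]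
  have := hπ x
  have := hπ y
  field_simp
  ring

theorem twisted_triangle (hH : IsHittingTime P H) (hπP : π ᵥ* P = π) (hπ1 : ∑ s, π s = 1)
    (hharm : ∀ f : S → ℝ, P *ᵥ f = f → ∀ s t, f s = f t) (hπ : ∀ s, π s ≠ 0)
    (hσ : Function.Involutive σ) (hπσ : ∀ s, π (σ s) = π s)
    (hrev : ∀ s t, π s * P (σ s) (σ t) = π t * P t s) (x y z : S) :
    H x (σ y) + H y (σ z) + H z (σ x) = H x (σ z) + H z (σ y) + H y (σ x) := by
  linarith [hH.sub_twisted_eq hπP hπ1 hharm hπ hσ hπσ hrev x y,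
    hH.sub_twisted_eq hπP hπ1 hharm hπ hσ hπσ hrev y z,
    hH.sub_twisted_eq hπP hπ1 hharm hπ hσ hπσ hrev z x]

end IsHittingTime

end HittingTimes

namespace NAState

variable {V : Type*} {G : SimpleGraph V}

@[elab_as_elim, induction_eliminator]
protected theorem induction {motive : NAState V G → Prop} (orig : ∀ v, motive (orig v))
    (intm : ∀ a b h, motive (intm a b h)) (s : NAState V G) : motive s := by
  rcases s with v | ⟨⟨a, b⟩, h⟩
  exacts [orig v, intm a b h]

@[simp] lemma orig_inj {v w : V} : (orig v : NAState V G) = orig w ↔ v = w :=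
  Sum.inl_injective.eq_iff

@[simp] lemma intm_inj {a b c d : V} {h : G.Adj a b} {h' : G.Adj c d} :
    intm a b h = intm c d h' ↔ a = c ∧ b = d :=
  Sum.inr_injective.eq_iff.trans (Subtype.ext_iff.trans Prod.mk_inj)

@[simp] lemma orig_ne_intm {v a b : V} {h : G.Adj a b} : orig v ≠ intm a b h :=
  Sum.inl_ne_inr

@[simp] lemma intm_ne_orig {v a b : V} {h : G.Adj a b} : intm a b h ≠ orig v :=
  Sum.inr_ne_inl

@[simp] lemma bar_orig (v : V) : bar (orig v : NAState V G) = orig v := rfl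

@[simp] lemma bar_intm (a b : V) (h : G.Adj a b) : bar (intm a b h) = intm b a h.symm := rfl

lemma bar_involutive : Function.Involutive (bar : NAState V G → NAState V G) := by
  intro s
  induction s <;> rfl

instance [Subsingleton V] : Subsingleton (NAState V G) := by
  refine ⟨fun s t => ?_⟩
  induction s with
  | intm a b h => exact absurd (Subsingleton.elim a b) h.ne
  | orig v =>
    induction t with
    | intm a b h => exact absurd (Subsingleton.elim a b) h.ne
    | orig w => rw [Subsingleton.elim v w]

variable [Fintype V] [DecidableRel G.Adj]

instance : Fintype (NAState V G) :=
  inferInstanceAs (Fintype (V ⊕ {p : V × V // G.Adj p.1 p.2}))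

@[simp] lemma asDeg_orig (v : V) : asDeg (orig v : NAState V G) = G.degree v := rfl

@[simp] lemma asDeg_intm (a b : V) (h : G.Adj a b) : asDeg (intm a b h) = 1 := rfl

lemma asSum_orig (f : NAState V G → ℝ) (v : V) :
    asSum f (orig v) = ∑ w ∈ (G.neighborFinset v).attach,
      f (intm v w ((G.mem_neighborFinset _ _).mp w.2)) := rfl

@[simp] lemma asSum_intm (f : NAState V G → ℝ) (a b : V) (h : G.Adj a b) :
    asSum f (intm a b h) = f (orig b) := rfl

lemma asDeg_bar (s : NAState V G) : asDeg (bar s) = asDeg s := by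
  induction s <;> rfl

lemma asDeg_pos (hdeg : ∀ v, 0 < G.degree v) (s : NAState V G) : 0 < asDeg s := by
  induction s with
  | orig v => rw [asDeg_orig]; exact_mod_cast hdeg v
  | intm => exact one_pos

lemma asSum_one (s : NAState V G) : asSum (fun _ => 1) s = asDeg s := by
  induction s <;> simp [asSum_orig]

lemma asSum_nonneg {f : NAState V G → ℝ} (hf : 0 ≤ f) (s : NAState V G) : 0 ≤ asSum f s := by
  induction s with
  | orig v => exact Finset.sum_nonneg fun w _ => hf _
  | intm a b h => exact hf _

variable [DecidableEq V]

instance : DecidableEq (NAState V G) :=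
  inferInstanceAs (DecidableEq (V ⊕ {p : V × V // G.Adj p.1 p.2}))

lemma asSum_eq_sum (f : NAState V G → ℝ) (s : NAState V G) :
    asSum f s = ∑ t, f t * asSum (Pi.single t 1) s := by
  induction s with
  | orig v =>
    simp only [asSum_orig, Finset.mul_sum]
    rw [Finset.sum_comm]
    simp [Pi.single_apply]
  | intm a b h => simp [Pi.single_apply]

lemma asSum_single_intm_orig (a b : V) (h : G.Adj a b) (v : V) :
    asSum (Pi.single (intm a b h) 1) (orig v) = if a = v then 1 else 0 := by
  by_cases hav : a = v
  · subst hav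
    simp [asSum_orig, Pi.single_apply, Finset.sum_attach (G.neighborFinset a)
      (fun w => if w = b then (1 : ℝ) else 0), h]
  · simp [asSum_orig, Ne.symm hav, hav]

lemma asSum_single_bar (s t : NAState V G) :
    asSum (Pi.single t 1) s = asSum (Pi.single (bar s) 1) (bar t) := by
  induction s with
  | orig v =>
    induction t with
    | orig w => simp [asSum_orig]
    | intm a b h => simp [asSum_single_intm_orig, Pi.single_apply]
  | intm a b h =>
    induction t with
    | orig w => simp [asSum_single_intm_orig, Pi.single_apply]
    | intm c d h' => simp

-- The uniform step to an adjacent state, written through `asSum` so that `transition *ᵥ f` is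
-- `asSum f / asDeg` (`transition_mulVec`).
noncomputable def transition : Matrix (NAState V G) (NAState V G) ℝ :=
  of fun s t => (asDeg s)⁻¹ * asSum (Pi.single t 1) s

lemma transition_mulVec (f : NAState V G → ℝ) (s : NAState V G) :
    (transition *ᵥ f) s = (asDeg s)⁻¹ * asSum f s := by
  simp only [mulVec, dotProduct, transition, of_apply, asSum_eq_sum f s, Finset.mul_sum]
  exact Finset.sum_congr rfl fun t _ => by ring

lemma transition_nonneg (s t : NAState V G) : 0 ≤ transition s t :=
  mul_nonneg (inv_nonneg.mpr (asSum_one s ▸ asSum_nonneg (fun _ => zero_le_one) s))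
    (asSum_nonneg (Pi.single_nonneg.mpr zero_le_one) s)

lemma sum_transition (hdeg : ∀ v, 0 < G.degree v) (s : NAState V G) :
    ∑ t, transition s t = 1 := by
  have h := transition_mulVec (fun _ => 1) s
  simp only [mulVec, dotProduct, mul_one, asSum_one] at h
  rw [h, inv_mul_cancel₀ (asDeg_pos hdeg s).ne']

lemma transition_orig_intm (a b : V) (h : G.Adj a b) :
    transition (orig a) (intm a b h) = (G.degree a : ℝ)⁻¹ := by
  simp [transition, asSum_single_intm_orig]

lemma transition_intm_orig (a b : V) (h : G.Adj a b) :
    transition (intm a b h) (orig b) = 1 := by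
  simp [transition]

lemma reflTransGen_transition (hconn : G.Connected) (s t : NAState V G) :
    Relation.ReflTransGen (fun a b => transition a b ≠ 0) s t := by
  have hout : ∀ a b (h : G.Adj a b), transition (orig a) (intm a b h) ≠ 0 := fun a b h => by
    rw [transition_orig_intm]
    exact inv_ne_zero (Nat.cast_ne_zero.mpr h.degree_pos_left.ne')
  have hin : ∀ a b (h : G.Adj a b), transition (intm a b h) (orig b) ≠ 0 := fun a b h => by
    rw [transition_intm_orig]
    exact one_ne_zero
  have horig : ∀ a b,
      Relation.ReflTransGen (fun s t : NAState V G => transition s t ≠ 0) (orig a) (orig b) := by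
    intro a b
    induction (hconn.preconnected a b).some with
    | nil => exact .refl
    | cons h _ ih => exact .head (hout _ _ h) (.head (hin _ _ h) ih)
  have hfrom : ∀ v t,
      Relation.ReflTransGen (fun s t : NAState V G => transition s t ≠ 0) (orig v) t := by
    intro v t
    induction t with
    | orig w => exact horig v w
    | intm a b h => exact (horig v a).tail (hout a b h)
  induction s with
  | orig v => exact hfrom v t
  | intm a b h => exact .head (hin a b h) (hfrom b t)

lemma asDeg_mul_transition_bar (hdeg : ∀ v, 0 < G.degree v) (s t : NAState V G) :
    asDeg s * transition (bar s) (bar t) = asDeg t * transition t s := by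
  simp only [transition, of_apply, asDeg_bar, ← mul_assoc,
    mul_inv_cancel₀ (asDeg_pos hdeg _).ne', one_mul, asSum_single_bar t s]

lemma isHittingTime_transition (Ht : NAState V G → NAState V G → ℝ)
    (hHt0 : ∀ s, Ht s s = 0)
    (hHtorig : ∀ (v : V) (s : NAState V G), orig v ≠ s →
      Ht (orig v) s = 1 + (1 / (G.degree v : ℝ)) * asSum (fun z => Ht z s) (orig v))
    (hHtintm : ∀ (a b : V) (h : G.Adj a b) (s : NAState V G), intm a b h ≠ s →
      Ht (intm a b h) s = 1 + Ht (orig b) s) :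
    IsHittingTime transition Ht := by
  refine ⟨hHt0, fun s t hst => ?_⟩
  rw [transition_mulVec]
  induction s with
  | orig v => rw [hHtorig v t hst, asDeg_orig, one_div]
  | intm a b h => rw [hHtintm a b h t hst, asDeg_intm, asSum_intm, inv_one, one_mul]

end NAState

theorem stmt5 {V : Type*} [Fintype V] [DecidableEq V] (G : SimpleGraph V)
    [DecidableRel G.Adj] (hconn : G.Connected)
    (Ht : NAState V G → NAState V G → ℝ)
    (hHt0 : ∀ s, Ht s s = 0)
    (hHtorig : ∀ (v : V) (s : NAState V G), NAState.orig v ≠ s →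
      Ht (NAState.orig v) s =
        1 + (1 / (G.degree v : ℝ)) * NAState.asSum (fun z => Ht z s) (NAState.orig v))
    (hHtintm : ∀ (a b : V) (h : G.Adj a b) (s : NAState V G), NAState.intm a b h ≠ s →
      Ht (NAState.intm a b h) s = 1 + Ht (NAState.orig b) s)
    (x y z : NAState V G) :
    Ht x y.bar + Ht y z.bar + Ht z x.bar = Ht x z.bar + Ht z y.bar + Ht y x.bar := by
  open NAState in
  rcases subsingleton_or_nontrivial V with hV | hV
  · rw [Subsingleton.elim y x, Subsingleton.elim z x]
  have hdeg : ∀ v, 0 < G.degree v := fun v => hconn.preconnected.degree_pos_of_nontrivial v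
  have hT : 0 < ∑ u : NAState V G, asDeg u :=
    Finset.sum_pos (fun s _ => asDeg_pos hdeg s) ⟨orig hconn.nonempty.some, Finset.mem_univ _⟩
  set π : NAState V G → ℝ := fun s => asDeg s / ∑ u : NAState V G, asDeg u
  have hrev : ∀ s t, π s * transition (bar s) (bar t) = π t * transition t s := fun s t => by
    simp only [π, div_mul_eq_mul_div, asDeg_mul_transition_bar hdeg]
  exact (isHittingTime_transition Ht hHt0 hHtorig hHtintm).twisted_triangle
    (vecMul_eq_self_of_twisted bar_involutive (sum_transition hdeg) hrev)
    (by simp only [π, ← Finset.sum_div, div_self hT.ne'])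
    (fun f hf => eq_of_mulVec_eq_self transition_nonneg (sum_transition hdeg)
      (reflTransGen_transition hconn) hf)
    (fun s => (div_pos (asDeg_pos hdeg s) hT).ne') bar_involutive
    (fun s => by simp only [π, asDeg_bar]) hrev x y z
end

section
/- If agents can meet only at original vertices, then there exists an adversarial scheduler strategy under which two agents performing non-atomic random walks on any graph never meet. -/
open Finset

/-- One move of an agent in the non-atomic walk. -/
inductive NAMove {V : Type*} (G : SimpleGraph V) : NAState V G → NAState V G → Prop
  | toIntm (v w : V) (h : G.Adj v w) : NAMove G (NAState.orig v) (NAState.intm v w h)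
  | toVert (a b : V) (h : G.Adj a b) : NAMove G (NAState.intm a b h) (NAState.orig b)

/-- One round of the two-agent process under a deterministic scheduler strategy:
the scheduler selects one agent (according to `Str`), which makes one move while
the other agent stays put. -/
def StratStep {V : Type*} (G : SimpleGraph V)
    (Str : NAState V G × NAState V G → Bool)
    (c c' : NAState V G × NAState V G) : Prop :=
  if Str c then NAMove G c.1 c'.1 ∧ c'.2 = c.2 else NAMove G c.2 c'.2 ∧ c'.1 = c.1

/-- The adversarial strategy: if one agent is at an original vertex `v` and the other
is at an intermediate state heading into `v`, move the agent at `v`. -/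
def advStr {V : Type*} [DecidableEq V] (G : SimpleGraph V) :
    NAState V G × NAState V G → Bool
  | (Sum.inl v, Sum.inr ⟨(_, w), _⟩) => decide (w = v)
  | (Sum.inr ⟨(_, w), _⟩, Sum.inl v) => !decide (w = v)
  | _ => true

theorem stmt12 {V : Type*} [Fintype V] [DecidableEq V] (G : SimpleGraph V)
    [DecidableRel G.Adj] (hconn : G.Connected) :
    ∃ Str : NAState V G × NAState V G → Bool,
      ∀ (x y : V), x ≠ y →
        ∀ seq : ℕ → NAState V G × NAState V G,
          seq 0 = (NAState.orig x, NAState.orig y) →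
          (∀ n, StratStep G Str (seq n) (seq (n + 1))) →
          ∀ n, ¬ ∃ v : V, seq n = (NAState.orig v, NAState.orig v) := by
  refine ⟨advStr G, fun x y hxy seq h0 hstep => ?_⟩
  intro n
  induction n with
  | zero =>
    rintro ⟨v, hv⟩
    rw [h0] at hv
    obtain ⟨h1, h2⟩ := Prod.mk.injEq .. ▸ hv
    exact hxy ((Sum.inl.inj h1).trans (Sum.inl.inj h2).symm)
  | succ n ih =>
    rintro ⟨v, hv⟩
    have hs := hstep n
    unfold StratStep at hs
    split at hs
    · -- agent 1 moved
      next hstr =>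
      obtain ⟨hmove, heq⟩ := hs
      rw [hv] at hmove heq
      generalize hA : (seq n).1 = s at hmove
      cases hmove with
      | toVert a b h =>
        have hc : seq n = (NAState.intm a v h, NAState.orig v) := by
          exact Prod.ext hA heq.symm
        rw [hc] at hstr
        simp [advStr, NAState.intm, NAState.orig] at hstr
    · -- agent 2 moved
      next hstr =>
      obtain ⟨hmove, heq⟩ := hs
      rw [hv] at hmove heq
      generalize hA : (seq n).2 = s at hmove
      cases hmove with
      | toVert a b h =>
        have hc : seq n = (NAState.orig v, NAState.intm a v h) := by
          exact Prod.ext heq.symm hA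
        rw [hc] at hstr
        simp [advStr, NAState.intm, NAState.orig] at hstr
end
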